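/- arXiv:1308.1652 — 2 statements merged into one kernel-verified Lean document; each statement's English description precedes it below -/
import Mathlib

section
/- If n ≥ 4 is even, then n + 2/n < q(F_n) < n + 2/(n-1). -/
open SimpleGraph

/-- The signless Laplacian matrix `Q(G) = D(G) + A(G)` of a finite simple graph. -/
noncomputable def signlessLaplacian {V : Type*} [Fintype V] [DecidableEq V]
    (G : SimpleGraph V) : Matrix V V ℝ :=
  letI := Classical.decRel G.Adj
  Matrix.diagonal (fun v => (G.degree v : ℝ)) + G.adjMatrix ℝ

/-- The `Q`-index of a graph: the largest eigenvalue of its signless Laplacian. -/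
noncomputable def qIndex {V : Type*} [Fintype V] [DecidableEq V]
    (G : SimpleGraph V) : ℝ :=
  sSup (spectrum ℝ (signlessLaplacian G))

/-- `H` is contained in `G` as a (not necessarily induced) subgraph. -/
def ContainsCopy {α β : Type*} (H : SimpleGraph α) (G : SimpleGraph β) : Prop :=
  ∃ f : α ↪ β, ∀ ⦃a b⦄, H.Adj a b → G.Adj (f a) (f b)

/-- The friendship-type graph `F_n`: vertex `0` is dominating; the remaining
vertices are paired `(1,2), (3,4), …`; for even `n` the last vertex is a pendant. -/
def friendshipGraph (n : ℕ) : SimpleGraph (Fin n) where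
  Adj i j := i ≠ j ∧ (i.val = 0 ∨ j.val = 0 ∨ (i.val + 1) / 2 = (j.val + 1) / 2)
  symm := by
    constructor
    intro i j ⟨h1, h2⟩
    exact ⟨h1.symm, by tauto⟩
  loopless := by
    constructor
    intro i ⟨h1, _⟩
    exact h1 rfl

/-- The graph `S_{n,k} = K_k ∨ \overline{K}_{n-k}`: the first `k` vertices form a
complete graph joined to an independent set on the remaining `n - k` vertices. -/
def sGraph (n k : ℕ) : SimpleGraph (Fin n) where
  Adj i j := i ≠ j ∧ (i.val < k ∨ j.val < k)
  symm := by
    constructor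
    intro i j ⟨h1, h2⟩
    exact ⟨h1.symm, h2.symm⟩
  loopless := by
    constructor
    intro i ⟨h1, _⟩
    exact h1 rfl

/-- The number of edges of `G` with one endpoint in `X` and the other in `Y`
(counted as ordered pairs in `X × Y`; for disjoint `X`, `Y` this is `e(X,Y)`). -/
noncomputable def edgesBetween {V : Type*} [Fintype V] [DecidableEq V]
    (G : SimpleGraph V) (X Y : Finset V) : ℕ :=
  letI := Classical.decRel G.Adj
  ((X ×ˢ Y).filter fun p => G.Adj p.1 p.2).card

/-- The number of edges of `G` with both endpoints in `X`. -/
noncomputable def edgesWithin {V : Type*} [Fintype V] [DecidableEq V]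
    (G : SimpleGraph V) (X : Finset V) : ℕ :=
  edgesBetween G X X / 2

/-! Write `n = 2m + 2`. Splitting `F_n` into the dominating vertex, the pendant vertex and the `2m`
triangle vertices gives an equitable partition with quotient matrix
`[[2m+1, 1, 2m], [1, 1, 0], [1, 0, 3]]`, whose characteristic polynomial is
`(μ - 2) ((μ - n)(μ - 1) - 2)`. An eigenvector of `Q(F_n)` for an eigenvalue `μ ∉ {1, 3}` is
constant on the parts and fixed by its value at the centre, so every eigenvalue other than
`1, 2, 3` solves `(μ - n)(μ - 1) = 2`; conversely the root of this equation in `(n, n + 1)` lifts to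
an eigenvector. Hence `q(F_n)` is that root, and both bounds follow from `q - n = 2 / (q - 1)`. -/

open Finset Matrix

theorem Matrix.mem_spectrum_iff_exists_mulVec_eq_smul {ι K : Type*} [Fintype ι] [DecidableEq ι]
    [Field K] (A : Matrix ι ι K) (μ : K) :
    μ ∈ spectrum K A ↔ ∃ x ≠ 0, A *ᵥ x = μ • x := by
  rw [← Matrix.spectrum_toLin', ← Module.End.hasEigenvalue_iff_mem_spectrum]
  constructor
  · intro h
    obtain ⟨x, hx⟩ := h.exists_hasEigenvector
    exact ⟨x, hx.2, Module.End.mem_eigenspace_iff.mp hx.1⟩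
  · rintro ⟨x, hx0, hx⟩
    exact Module.End.hasEigenvalue_of_hasEigenvector (x := x)
      ⟨Module.End.mem_eigenspace_iff.mpr hx, hx0⟩

theorem signlessLaplacian_mulVec_apply_of_neighborFinset_eq {V : Type*} [Fintype V]
    [DecidableEq V] (G : SimpleGraph V) [DecidableRel G.Adj] {v : V} {s : Finset V}
    (hs : G.neighborFinset v = s) (x : V → ℝ) :
    (signlessLaplacian G *ᵥ x) v = #s * x v + ∑ u ∈ s, x u := by
  classical
  rw [← hs, card_neighborFinset_eq_degree]
  unfold signlessLaplacian
  rw [add_mulVec, Pi.add_apply, mulVec_diagonal, adjMatrix_mulVec_apply]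
  congr!

theorem card_mul_add_sum_eq_of_signlessLaplacian_mulVec_eq_smul {V : Type*} [Fintype V]
    [DecidableEq V] (G : SimpleGraph V) [DecidableRel G.Adj] {μ : ℝ} {x : V → ℝ}
    (hx : signlessLaplacian G *ᵥ x = μ • x) {v : V} {s : Finset V}
    (hs : G.neighborFinset v = s) : #s * x v + ∑ u ∈ s, x u = μ * x v := by
  rw [← signlessLaplacian_mulVec_apply_of_neighborFinset_eq G hs, hx, Pi.smul_apply, smul_eq_mul]

theorem mem_Ioo_of_sub_mul_sub_one_eq_two {N q : ℝ} (hN : 3 < N) (hq : 1 < q)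
    (h : (q - N) * (q - 1) = 2) : q ∈ Set.Ioo (N + 2 / N) (N + 2 / (N - 1)) := by
  have hqN : q - N = 2 / (q - 1) := by rw [eq_div_iff (by linarith), h]
  have hNq : N < q := by nlinarith
  have hqN1 : q < N + 1 := by
    have : 2 / (q - 1) < 1 := by rw [div_lt_one (by linarith)]; linarith
    linarith
  constructor
  · have : 2 / N < 2 / (q - 1) := div_lt_div_of_pos_left two_pos (by linarith) (by linarith)
    linarith
  · have : 2 / (q - 1) < 2 / (N - 1) := div_lt_div_of_pos_left two_pos (by linarith) (by linarith)
    linarith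

theorem exists_mem_Ioo_sub_mul_sub_one_eq_two {N : ℝ} (hN : 2 < N) :
    ∃ q ∈ Set.Ioo N (N + 1), (q - N) * (q - 1) = 2 :=
  intermediate_value_Ioo (by linarith) (by fun_prop) ⟨by simp, by linarith⟩

instance (n : ℕ) : DecidableRel (friendshipGraph n).Adj := fun i j =>
  inferInstanceAs (Decidable (i ≠ j ∧ (i.val = 0 ∨ j.val = 0 ∨ (i.val + 1) / 2 = (j.val + 1) / 2)))

namespace friendshipGraph

variable {m : ℕ}

@[simp]
theorem adj {n : ℕ} {i j : Fin n} : (friendshipGraph n).Adj i j ↔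
    i ≠ j ∧ (i.val = 0 ∨ j.val = 0 ∨ (i.val + 1) / 2 = (j.val + 1) / 2) :=
  Iff.rfl

def pendant (m : ℕ) : Fin (2 * m + 2) := ⟨2 * m + 1, by omega⟩

@[simp]
theorem val_pendant : (pendant m).val = 2 * m + 1 := rfl

def middle (m : ℕ) : Finset (Fin (2 * m + 2)) := {0, pendant m}ᶜ

theorem mem_middle {v : Fin (2 * m + 2)} : v ∈ middle m ↔ v ≠ 0 ∧ v ≠ pendant m := by
  simp [middle]

theorem card_middle : #(middle m) = 2 * m := by
  rw [middle, card_compl, card_pair (by simp [Fin.ext_iff]), Fintype.card_fin]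
  omega

theorem pendant_ne_zero : pendant m ≠ 0 := by
  simp [Fin.ext_iff]

theorem pendant_notMem_middle : pendant m ∉ middle m := by
  simp [mem_middle]

theorem eq_zero_or_eq_pendant_or_mem_middle (v : Fin (2 * m + 2)) :
    v = 0 ∨ v = pendant m ∨ v ∈ middle m := by
  rw [mem_middle]
  tauto

theorem neighborFinset_zero :
    (friendshipGraph (2 * m + 2)).neighborFinset 0 = insert (pendant m) (middle m) := by
  ext v
  rw [mem_neighborFinset, mem_insert, mem_middle]
  have := @pendant_ne_zero m
  simp only [adj, Fin.val_zero, true_or, and_true]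
  grind

theorem neighborFinset_pendant :
    (friendshipGraph (2 * m + 2)).neighborFinset (pendant m) = {0} := by
  ext v
  rw [mem_neighborFinset]
  simp only [adj, mem_singleton, ne_eq, Fin.ext_iff, val_pendant, Fin.val_zero]
  omega

theorem exists_neighborFinset_eq_pair {v : Fin (2 * m + 2)} (hv : v ∈ middle m) :
    ∃ w ∈ middle m, (friendshipGraph (2 * m + 2)).neighborFinset v = {0, w} ∧
      (friendshipGraph (2 * m + 2)).neighborFinset w = {0, v} := by
  rw [mem_middle] at hv
  have hv0 : v.val ≠ 0 := Fin.val_ne_zero_iff.mpr hv.1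
  have hvp : v.val ≠ 2 * m + 1 := fun h => hv.2 (Fin.ext h)
  obtain ⟨w, hw0, hwp, hwv, hvw⟩ : ∃ w : Fin (2 * m + 2), w.val ≠ 0 ∧ w.val ≠ 2 * m + 1 ∧
      w.val ≠ v.val ∧ (w.val + 1) / 2 = (v.val + 1) / 2 := by
    rcases Nat.even_or_odd v.val with ⟨k, hk⟩ | ⟨k, hk⟩
    · exact ⟨⟨v.val - 1, by omega⟩, by dsimp only; omega⟩
    · exact ⟨⟨v.val + 1, by omega⟩, by dsimp only; omega⟩
  refine ⟨w, mem_middle.mpr ?_, ?_, ?_⟩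
  · exact ⟨Fin.val_ne_zero_iff.mp hw0, fun h => hwp (congrArg Fin.val h)⟩
  all_goals
    ext u
    rw [mem_neighborFinset]
    simp only [adj, mem_insert, mem_singleton, ne_eq, Fin.ext_iff, Fin.val_zero]
    omega

section Eigenvector

variable {μ : ℝ} {x : Fin (2 * m + 2) → ℝ}
  (hx : signlessLaplacian (friendshipGraph (2 * m + 2)) *ᵥ x = μ • x)
include hx

theorem sub_one_mul_apply_pendant : (μ - 1) * x (pendant m) = x 0 := by
  have h := card_mul_add_sum_eq_of_signlessLaplacian_mulVec_eq_smul _ hx neighborFinset_pendant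
  rw [card_singleton, sum_singleton, Nat.cast_one] at h
  linear_combination -h

theorem sub_three_mul_apply_of_mem_middle (hμ : μ ≠ 1) {v : Fin (2 * m + 2)} (hv : v ∈ middle m) :
    (μ - 3) * x v = x 0 := by
  obtain ⟨w, hw, hNv, hNw⟩ := exists_neighborFinset_eq_pair hv
  have hrv := card_mul_add_sum_eq_of_signlessLaplacian_mulVec_eq_smul _ hx hNv
  have hrw := card_mul_add_sum_eq_of_signlessLaplacian_mulVec_eq_smul _ hx hNw
  have hw0 : (0 : Fin (2 * m + 2)) ≠ w := (mem_middle.mp hw).1.symm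
  have hv0 : (0 : Fin (2 * m + 2)) ≠ v := (mem_middle.mp hv).1.symm
  rw [card_pair hw0, sum_pair hw0] at hrv
  rw [card_pair hv0, sum_pair hv0] at hrw
  have hvw : x v = x w := by
    have : (μ - 1) * (x v - x w) = 0 := by linear_combination hrw - hrv
    linear_combination (mul_eq_zero.mp this).resolve_left (sub_ne_zero.mpr hμ)
  rw [← hvw] at hrv
  push_cast at hrv
  linear_combination -hrv

theorem sub_mul_apply_zero :
    (μ - (2 * m + 1)) * x 0 = x (pendant m) + ∑ v ∈ middle m, x v := by
  have h := card_mul_add_sum_eq_of_signlessLaplacian_mulVec_eq_smul _ hx neighborFinset_zero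
  rw [card_insert_of_notMem pendant_notMem_middle, card_middle,
    sum_insert pendant_notMem_middle] at h
  push_cast at h
  linear_combination -h

end Eigenvector

theorem sub_mul_sub_one_eq_two_of_mem_spectrum {μ : ℝ}
    (hμ : μ ∈ spectrum ℝ (signlessLaplacian (friendshipGraph (2 * m + 2))))
    (h1 : μ ≠ 1) (h2 : μ ≠ 2) (h3 : μ ≠ 3) : (μ - (2 * m + 2)) * (μ - 1) = 2 := by
  obtain ⟨x, hx0, hx⟩ := (mem_spectrum_iff_exists_mulVec_eq_smul _ μ).mp hμ
  have hp := sub_one_mul_apply_pendant hx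
  have hmid := fun v (hv : v ∈ middle m) => sub_three_mul_apply_of_mem_middle hx h1 hv
  have hsum : (μ - 3) * ∑ v ∈ middle m, x v = 2 * m * x 0 := by
    rw [mul_sum, sum_congr rfl hmid, sum_const, card_middle, nsmul_eq_mul]
    push_cast
    ring
  have hcentre : x 0 ≠ 0 := by
    intro h0
    apply hx0
    funext v
    rcases eq_zero_or_eq_pendant_or_mem_middle v with rfl | rfl | hv
    · exact h0
    · simpa [h0, sub_ne_zero.mpr h1] using hp
    · simpa [h0, sub_ne_zero.mpr h3] using hmid v hv
  have key : (μ - 2) * ((μ - (2 * m + 2)) * (μ - 1) - 2) * x 0 = 0 := by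
    linear_combination (μ - 1) * (μ - 3) * sub_mul_apply_zero hx + (μ - 3) * hp + (μ - 1) * hsum
  exact sub_eq_zero.mp ((mul_eq_zero.mp ((mul_eq_zero.mp key).resolve_right hcentre)).resolve_left
    (sub_ne_zero.mpr h2))

def blockVec (a b c : ℝ) : Fin (2 * m + 2) → ℝ :=
  fun v => if v = 0 then a else if v = pendant m then b else c

@[simp]
theorem blockVec_zero (a b c : ℝ) : blockVec (m := m) a b c 0 = a := if_pos rfl

@[simp]
theorem blockVec_pendant (a b c : ℝ) : blockVec a b c (pendant m) = b := by
  simp [blockVec, pendant_ne_zero]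

theorem blockVec_of_mem_middle (a b c : ℝ) {v : Fin (2 * m + 2)} (hv : v ∈ middle m) :
    blockVec a b c v = c := by
  simp [blockVec, (mem_middle.mp hv).1, (mem_middle.mp hv).2]

theorem smul_blockVec (μ a b c : ℝ) :
    μ • blockVec (m := m) a b c = blockVec (μ * a) (μ * b) (μ * c) := by
  funext v
  simp only [blockVec, Pi.smul_apply, smul_eq_mul]
  split_ifs <;> rfl

theorem signlessLaplacian_mulVec_blockVec (a b c : ℝ) :
    signlessLaplacian (friendshipGraph (2 * m + 2)) *ᵥ blockVec a b c =
      blockVec ((2 * m + 1) * a + b + 2 * m * c) (a + b) (a + 3 * c) := by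
  funext v
  rcases eq_zero_or_eq_pendant_or_mem_middle v with rfl | rfl | hv
  · rw [signlessLaplacian_mulVec_apply_of_neighborFinset_eq _ neighborFinset_zero,
      card_insert_of_notMem pendant_notMem_middle, card_middle,
      sum_insert pendant_notMem_middle, sum_congr rfl fun v hv => blockVec_of_mem_middle a b c hv,
      sum_const, card_middle, nsmul_eq_mul, blockVec_zero, blockVec_zero, blockVec_pendant]
    push_cast
    ring
  · rw [signlessLaplacian_mulVec_apply_of_neighborFinset_eq _ neighborFinset_pendant,
      card_singleton, sum_singleton, blockVec_zero, blockVec_pendant, blockVec_pendant]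
    push_cast
    ring
  · obtain ⟨w, hw, hNv, -⟩ := exists_neighborFinset_eq_pair hv
    have hw0 : (0 : Fin (2 * m + 2)) ≠ w := (mem_middle.mp hw).1.symm
    rw [signlessLaplacian_mulVec_apply_of_neighborFinset_eq _ hNv, card_pair hw0, sum_pair hw0,
      blockVec_zero, blockVec_of_mem_middle _ _ _ hv, blockVec_of_mem_middle _ _ _ hw,
      blockVec_of_mem_middle _ _ _ hv]
    push_cast
    ring

theorem mem_spectrum_of_sub_mul_sub_one_eq_two {μ : ℝ} (h1 : μ ≠ 1) (h3 : μ ≠ 3)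
    (h : (μ - (2 * m + 2)) * (μ - 1) = 2) :
    μ ∈ spectrum ℝ (signlessLaplacian (friendshipGraph (2 * m + 2))) := by
  refine (mem_spectrum_iff_exists_mulVec_eq_smul _ μ).mpr
    ⟨blockVec ((μ - 1) * (μ - 3)) (μ - 3) (μ - 1), fun h0 => ?_, ?_⟩
  · have := congrFun h0 0
    rw [blockVec_zero, Pi.zero_apply] at this
    exact mul_ne_zero (sub_ne_zero.mpr h1) (sub_ne_zero.mpr h3) this
  · rw [signlessLaplacian_mulVec_blockVec, smul_blockVec]
    congr 1
    · linear_combination (2 - μ) * h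
    · ring
    · ring

end friendshipGraph

/-- For even `n ≥ 4`, `n + 2/n < q(F_n) < n + 2/(n-1)`. -/
theorem stmt_4 (n : ℕ) (hn : 4 ≤ n) (heven : Even n) :
    (n : ℝ) + 2 / (n : ℝ) < qIndex (friendshipGraph n) ∧
      qIndex (friendshipGraph n) < (n : ℝ) + 2 / ((n : ℝ) - 1) := by
  obtain ⟨m, rfl⟩ : ∃ m, n = 2 * m + 2 := by
    obtain ⟨k, rfl⟩ := heven
    exact ⟨k - 1, by omega⟩
  have hN : (4 : ℝ) ≤ (2 * m + 2 : ℕ) := by exact_mod_cast hn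
  push_cast at hN ⊢
  obtain ⟨μ, ⟨hNμ, -⟩, hμ⟩ :=
    exists_mem_Ioo_sub_mul_sub_one_eq_two (by linarith : (2 : ℝ) < 2 * m + 2)
  have hμQ := friendshipGraph.mem_spectrum_of_sub_mul_sub_one_eq_two (by linarith) (by linarith) hμ
  have hfin := (signlessLaplacian (friendshipGraph (2 * m + 2))).finite_spectrum
  have hμq : μ ≤ qIndex (friendshipGraph (2 * m + 2)) := le_csSup hfin.bddAbove hμQ
  have hqQ : qIndex (friendshipGraph (2 * m + 2)) ∈ _ := Set.Nonempty.csSup_mem ⟨μ, hμQ⟩ hfin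
  have hq := friendshipGraph.sub_mul_sub_one_eq_two_of_mem_spectrum hqQ
    (by linarith) (by linarith) (by linarith)
  exact mem_Ioo_of_sub_mul_sub_one_eq_two (by linarith) (by linarith) hq
end

section
/- Let G be a simple graph of order n containing no cycle of length 4 as a subgraph, and let u be a vertex of G. Then the number of edges of G joining the neighborhood Γ(u) of u to the complement V(G) \ Γ(u) is at most n - 1. -/
open SimpleGraph

/-! In a `C₄`-free graph two distinct vertices have at most one common neighbour. Count the
edges leaving `Γ(u)` by their endpoint `w ∉ Γ(u)`: `w = u` receives `deg u` of them, and every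
other `w` at most one, and there are `n - 1 - deg u` such `w`. -/

namespace SimpleGraph

open Finset

theorem containsCopy_cycleGraph_four {V : Type*} {G : SimpleGraph V} {a b c d : V}
    (hab : G.Adj a b) (hbc : G.Adj b c) (hcd : G.Adj c d) (hda : G.Adj d a)
    (hac : a ≠ c) (hbd : b ≠ d) : ContainsCopy (cycleGraph 4) G := by
  refine ⟨⟨![a, b, c, d], fun i j hij => ?_⟩, fun i j hij => ?_⟩
  · have := hab.ne; have := hbc.ne; have := hcd.ne; have := hda.ne
    fin_cases i <;> fin_cases j <;> simp_all
  · change G.Adj (![a, b, c, d] i) (![a, b, c, d] j)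
    fin_cases i <;> fin_cases j <;> first
      | exact absurd hij (by decide)
      | simp [hab, hbc, hcd, hda, hab.symm, hbc.symm, hcd.symm, hda.symm]

variable {V : Type*} [Fintype V] [DecidableEq V] (G : SimpleGraph V) [DecidableRel G.Adj]

theorem edgesBetween_eq_sum_card_filter_adj (X Y : Finset V) :
    edgesBetween G X Y = ∑ y ∈ Y, #{x ∈ X | G.Adj x y} := by
  unfold edgesBetween
  rw [card_filter, sum_product, sum_comm]
  refine sum_congr rfl fun y _ => ?_
  rw [card_filter]
  exact sum_congr rfl fun x _ => by congr

variable {G}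

theorem card_filter_adj_neighborFinset_le_one (hC4 : ¬ ContainsCopy (cycleGraph 4) G)
    {u w : V} (huw : u ≠ w) : #{x ∈ G.neighborFinset u | G.Adj x w} ≤ 1 := by
  refine card_le_one.2 fun a ha b hb => ?_
  simp only [mem_filter, mem_neighborFinset] at ha hb
  by_contra hab
  exact hC4 (containsCopy_cycleGraph_four ha.1 ha.2 hb.2.symm hb.1.symm huw hab)

theorem edgesBetween_neighborFinset_compl_le (hC4 : ¬ ContainsCopy (cycleGraph 4) G) (u : V) :
    edgesBetween G (G.neighborFinset u) (G.neighborFinset u)ᶜ ≤ Fintype.card V - 1 := by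
  set X := G.neighborFinset u
  have hu : u ∈ Xᶜ := by simp [X]
  have hX : #{x ∈ X | G.Adj x u} = #X :=
    congrArg card <| filter_true_of_mem fun x hx => ((G.mem_neighborFinset u x).1 hx).symm
  have hrest : ∑ w ∈ Xᶜ.erase u, #{x ∈ X | G.Adj x w} ≤ #(Xᶜ.erase u) := by
    simpa using sum_le_card_nsmul _ _ 1 fun w hw =>
      card_filter_adj_neighborFinset_le_one hC4 (ne_of_mem_erase hw).symm
  have hcard : #(Xᶜ.erase u) + #X + 1 = Fintype.card V := by
    have := card_erase_of_mem hu
    have := card_compl X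
    have := card_pos.2 ⟨u, hu⟩
    have := card_le_univ X
    omega
  rw [edgesBetween_eq_sum_card_filter_adj, ← add_sum_erase _ _ hu, hX]
  omega

end SimpleGraph

/-- If `G` has order `n` and no `C₄` as a subgraph, then for every vertex `u`,
`e(Γ(u), V \ Γ(u)) ≤ n - 1`. -/
theorem stmt_11 (n : ℕ) (G : SimpleGraph (Fin n)) [DecidableRel G.Adj]
    (hC4 : ¬ ContainsCopy (cycleGraph 4) G) (u : Fin n) :
    edgesBetween G (G.neighborFinset u) (G.neighborFinset u)ᶜ ≤ n - 1 := by
  simpa using edgesBetween_neighborFinset_compl_le hC4 u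
end
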